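/- arXiv:1603.05561 — 5 statements merged into one kernel-verified Lean document; each statement's English description precedes it below -/
import Mathlib

section
/- Let X be a complete separable metric space, m_n nonnegative Borel measures (finite on bounded sets) converging weakly to m, and Θ : X → [0,∞) a continuous function with limsup_n ∫ Θ dm_n ≤ ∫ Θ dm < ∞. Then ∫ v dm_n → ∫ v dm for every continuous v : X → ℝ with |v| ≤ C·Θ for some constant C. -/
open MeasureTheory Filter Metric Set
open scoped ENNReal Topology NNReal

def BoundedlyFinite {X : Type*} [MetricSpace X] [MeasurableSpace X] (μ : Measure X) : Prop :=
  ∀ s : Set X, Bornology.IsBounded s → μ s < ∞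

def WeakConv {X : Type*} [MetricSpace X] [MeasurableSpace X]
    (mn : ℕ → Measure X) (m : Measure X) : Prop :=
  ∀ v : X → ℝ, Continuous v → (∃ C, ∀ x, |v x| ≤ C) →
    Bornology.IsBounded (Function.support v) →
    Tendsto (fun n => ∫ x, v x ∂(mn n)) atTop (𝓝 (∫ x, v x ∂m))

private lemma clamp_key (C t a c M : ℝ) (hC : 0 < C) (hM : 0 ≤ M)
    (hc0 : 0 ≤ c) (hc1 : c ≤ 1) (ha : |a| ≤ C * t) :
    |a - max (-(C*M)) (min a (C*M)) * c| ≤ C * (t - min t M * c) := by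
  have ha1 := abs_le.mp ha
  have hCM : 0 ≤ C * M := mul_nonneg hC.le hM
  rcases le_total a (C*M) with h1 | h1
  · rcases le_total (-(C*M)) a with h2 | h2
    · rw [min_eq_left h1, max_eq_right h2]
      rcases le_total t M with h3 | h3
      · rw [min_eq_left h3, abs_le]
        constructor <;> nlinarith [mul_nonneg (sub_nonneg.2 hc1) (sub_nonneg.2 ha1.2),
          mul_nonneg (sub_nonneg.2 hc1) (by linarith [ha1.1] : (0:ℝ) ≤ C*t + a)]
      · rw [min_eq_right h3, abs_le]
        constructor <;> nlinarith [mul_nonneg (sub_nonneg.2 hc1) (sub_nonneg.2 h2),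
          mul_nonneg (sub_nonneg.2 hc1) (sub_nonneg.2 h1), mul_nonneg hc0 (sub_nonneg.2 h3)]
    · rw [max_eq_left (le_trans (min_le_left _ _) h2)]
      rcases le_total t M with h3 | h3
      · rw [min_eq_left h3, abs_le]
        constructor <;> nlinarith [mul_nonneg hc0 (sub_nonneg.2 h3), mul_nonneg hc0 hCM,
          mul_nonneg (sub_nonneg.2 hc1) hCM]
      · rw [min_eq_right h3, abs_le]
        constructor <;> nlinarith [mul_nonneg hc0 hCM, mul_nonneg (sub_nonneg.2 hc1) hCM]
  · rw [min_eq_right h1, max_eq_right (by linarith)]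
    rcases le_total t M with h3 | h3
    · rw [min_eq_left h3, abs_le]
      constructor <;> nlinarith [mul_nonneg hc0 (sub_nonneg.2 h3), mul_nonneg hc0 hCM,
        mul_nonneg (sub_nonneg.2 hc1) hCM]
    · rw [min_eq_right h3, abs_le]
      constructor <;> nlinarith [mul_nonneg hc0 hCM, mul_nonneg (sub_nonneg.2 hc1) hCM]

/-- If `m_n → m` weakly, `Θ ≥ 0` is continuous with
`limsup_n ∫ Θ dm_n ≤ ∫ Θ dm < ∞`, then `∫ v dm_n → ∫ v dm` for every continuous `v`
with `|v| ≤ C Θ`. -/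
theorem stmt1 {X : Type*} [MetricSpace X] [CompleteSpace X]
    [TopologicalSpace.SeparableSpace X] [MeasurableSpace X] [BorelSpace X]
    (mn : ℕ → Measure X) (m : Measure X)
    (hmn : ∀ n, BoundedlyFinite (mn n)) (hm : BoundedlyFinite m)
    (hweak : WeakConv mn m)
    (Θ : X → ℝ) (hΘcont : Continuous Θ) (hΘnonneg : ∀ x, 0 ≤ Θ x)
    (hfin : ∫⁻ x, ENNReal.ofReal (Θ x) ∂m < ∞)
    (hlimsup : Filter.limsup (fun n => ∫⁻ x, ENNReal.ofReal (Θ x) ∂(mn n)) atTop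
      ≤ ∫⁻ x, ENNReal.ofReal (Θ x) ∂m)
    (v : X → ℝ) (hv : Continuous v) (C : ℝ) (hvC : ∀ x, |v x| ≤ C * Θ x) :
    Tendsto (fun n => ∫ x, v x ∂(mn n)) atTop (𝓝 (∫ x, v x ∂m)) := by
  -- If C ≤ 0 then v = 0
  rcases le_or_gt C 0 with hC | hC
  · have hv0 : v = fun _ => 0 := by
      funext x
      have h1 : |v x| ≤ 0 := (hvC x).trans (mul_nonpos_of_nonpos_of_nonneg hC (hΘnonneg x))
      simpa [abs_nonpos_iff] using h1
    simp only [hv0, integral_zero]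
    exact tendsto_const_nhds
  rcases isEmpty_or_nonempty X with hX | hX
  · simpa [integral_of_isEmpty] using tendsto_const_nhds
  obtain ⟨x0⟩ := hX
  -- basic integrability of Θ
  have hint_of_fin : ∀ μ : Measure X, (∫⁻ x, ENNReal.ofReal (Θ x) ∂μ < ∞) → Integrable Θ μ := by
    intro μ hμ
    refine ⟨hΘcont.aestronglyMeasurable, ?_⟩
    rw [hasFiniteIntegral_iff_ofReal (ae_of_all _ hΘnonneg)]
    exact hμ
  have hΘint : Integrable Θ m := hint_of_fin m hfin
  -- cutoffs
  set χ : ℕ → X → ℝ := fun k x => max 0 (min 1 ((k:ℝ) + 1 - dist x x0)) with hχdef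
  have hχcont : ∀ k, Continuous (χ k) :=
    fun k => continuous_const.max (continuous_const.min (by fun_prop))
  have hχ0 : ∀ k x, 0 ≤ χ k x := fun k x => le_max_left _ _
  have hχ1 : ∀ k x, χ k x ≤ 1 := fun k x => max_le zero_le_one (min_le_left _ _)
  have hχsupp : ∀ k, Function.support (χ k) ⊆ ball x0 ((k:ℝ)+1) := by
    intro k x hx
    by_contra hxb
    apply hx
    have hd : (k:ℝ) + 1 ≤ dist x x0 := by
      simpa [Metric.mem_ball, not_lt] using hxb
    simp only [hχdef, max_eq_left_iff]
    exact min_le_of_right_le (by linarith)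
  have hχeq1 : ∀ (k : ℕ) x, dist x x0 ≤ k → χ k x = 1 := by
    intro k x hd
    simp only [hχdef]
    rw [min_eq_left (by linarith), max_eq_right zero_le_one]
  -- truncations
  set φ : ℕ → X → ℝ := fun k x => min (Θ x) k * χ k x with hφdef
  set w : ℕ → X → ℝ := fun k x => max (-(C*k)) (min (v x) (C*k)) * χ k x with hwdef
  have hφ0 : ∀ k x, 0 ≤ φ k x :=
    fun k x => mul_nonneg (le_min (hΘnonneg x) (Nat.cast_nonneg k)) (hχ0 k x)
  have hφΘ : ∀ k x, φ k x ≤ Θ x := by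
    intro k x
    calc min (Θ x) k * χ k x ≤ min (Θ x) k * 1 :=
          mul_le_mul_of_nonneg_left (hχ1 k x) (le_min (hΘnonneg x) (Nat.cast_nonneg k))
      _ ≤ Θ x := by rw [mul_one]; exact min_le_left _ _
  have hkey : ∀ (k : ℕ) x, |v x - w k x| ≤ C * (Θ x - φ k x) :=
    fun k x => clamp_key C (Θ x) (v x) (χ k x) k hC (Nat.cast_nonneg k)
      (hχ0 k x) (hχ1 k x) (hvC x)
  -- bounds
  have hwabs : ∀ (k : ℕ) x, |w k x| ≤ C * k := by
    intro k x
    simp only [hwdef, abs_mul]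
    rw [abs_of_nonneg (hχ0 k x)]
    have h1 : |max (-(C*(k:ℝ))) (min (v x) (C*k))| ≤ C * k :=
      abs_le.2 ⟨le_max_left _ _, max_le
        (by nlinarith [mul_nonneg hC.le ((Nat.cast_nonneg k : (0:ℝ) ≤ k))]) (min_le_right _ _)⟩
    calc |max (-(C*(k:ℝ))) (min (v x) (C*k))| * χ k x
        ≤ (C * k) * 1 := mul_le_mul h1 (hχ1 k x) (hχ0 k x) (by positivity)
      _ = C * k := mul_one _
  have hwabsΘ : ∀ (k : ℕ) x, |w k x| ≤ C * Θ x := by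
    intro k x
    simp only [hwdef, abs_mul]
    rw [abs_of_nonneg (hχ0 k x)]
    have h1 : |max (-(C*(k:ℝ))) (min (v x) (C*k))| ≤ |v x| := by
      refine abs_le.2 ⟨le_max_of_le_right (le_min (neg_abs_le _) ?_), max_le ?_
        ((min_le_left _ _).trans (le_abs_self _))⟩
      · have : (0:ℝ) ≤ C * k := by positivity
        linarith [abs_nonneg (v x)]
      · have : (0:ℝ) ≤ C * k := by positivity
        linarith [abs_nonneg (v x)]
    calc |max (-(C*(k:ℝ))) (min (v x) (C*k))| * χ k x
        ≤ |v x| * 1 := mul_le_mul h1 (hχ1 k x) (hχ0 k x) (abs_nonneg _)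
      _ ≤ C * Θ x := by rw [mul_one]; exact hvC x
  have hφabs : ∀ (k : ℕ) x, |φ k x| ≤ (k:ℝ) := by
    intro k x
    rw [abs_of_nonneg (hφ0 k x)]
    simp only [hφdef]
    calc min (Θ x) (k:ℝ) * χ k x ≤ (k:ℝ) * 1 :=
          mul_le_mul (min_le_right _ _) (hχ1 k x) (hχ0 k x) (Nat.cast_nonneg k)
      _ = (k:ℝ) := mul_one _
  -- continuity
  have hφcont : ∀ k, Continuous (φ k) := fun k => by
    simp only [hφdef]; exact (hΘcont.min continuous_const).mul (hχcont k)
  have hwcont : ∀ k, Continuous (w k) := fun k => by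
    simp only [hwdef]; exact (continuous_const.max (hv.min continuous_const)).mul (hχcont k)
  -- bounded support
  have hsuppb : ∀ (k : ℕ) (f : X → ℝ),
      Bornology.IsBounded (Function.support (fun x => f x * χ k x)) := by
    intro k f
    refine (Metric.isBounded_ball (x := x0) (r := (k:ℝ)+1)).subset ?_
    intro x hx
    have h0 : χ k x ≠ 0 := fun h0 => (Function.mem_support.mp hx) (by rw [h0, mul_zero])
    exact hχsupp k (Function.mem_support.mpr h0)
  -- integrability
  have hvint : ∀ μ : Measure X, Integrable Θ μ → Integrable v μ := fun μ hΘμ =>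
    (hΘμ.const_mul C).mono' hv.aestronglyMeasurable
      (ae_of_all _ fun x => by rw [Real.norm_eq_abs]; exact hvC x)
  have hwint : ∀ (k : ℕ) (μ : Measure X), Integrable Θ μ → Integrable (w k) μ :=
    fun k μ hΘμ => (hΘμ.const_mul C).mono' (hwcont k).aestronglyMeasurable
      (ae_of_all _ fun x => by rw [Real.norm_eq_abs]; exact hwabsΘ k x)
  have hφint : ∀ (k : ℕ) (μ : Measure X), Integrable Θ μ → Integrable (φ k) μ :=
    fun k μ hΘμ => hΘμ.mono' (hφcont k).aestronglyMeasurable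
      (ae_of_all _ fun x => by rw [Real.norm_eq_abs, abs_of_nonneg (hφ0 k x)]; exact hφΘ k x)
  -- weak convergence of the truncations
  have hwt : ∀ k : ℕ, Tendsto (fun n => ∫ x, w k x ∂(mn n)) atTop (𝓝 (∫ x, w k x ∂m)) :=
    fun k => hweak (w k) (hwcont k) ⟨C * k, hwabs k⟩ (hsuppb k _)
  have hφt : ∀ k : ℕ, Tendsto (fun n => ∫ x, φ k x ∂(mn n)) atTop (𝓝 (∫ x, φ k x ∂m)) :=
    fun k => hweak (φ k) (hφcont k) ⟨(k:ℝ), hφabs k⟩ (hsuppb k _)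
  -- dominated convergence: ∫ φ k dm → ∫ Θ dm
  have hDCT : Tendsto (fun k => ∫ x, φ k x ∂m) atTop (𝓝 (∫ x, Θ x ∂m)) := by
    refine tendsto_integral_of_dominated_convergence Θ
      (fun k => (hφcont k).aestronglyMeasurable) hΘint
      (fun k => ae_of_all _ fun x => ?_) (ae_of_all _ fun x => ?_)
    · rw [Real.norm_eq_abs, abs_of_nonneg (hφ0 k x)]; exact hφΘ k x
    · refine tendsto_atTop_of_eventually_const (i₀ := ⌈max (Θ x) (dist x x0)⌉₊) ?_
      intro k hk
      have hk' : max (Θ x) (dist x x0) ≤ (k:ℝ) :=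
        le_trans (Nat.le_ceil _) (Nat.cast_le.2 hk)
      simp only [hφdef]
      rw [hχeq1 k x (le_trans (le_max_right _ _) hk'),
        min_eq_left (le_trans (le_max_left _ _) hk'), mul_one]
  -- key estimate for any measure
  have hest : ∀ (k : ℕ) (μ : Measure X), Integrable Θ μ →
      |∫ x, v x ∂μ - ∫ x, w k x ∂μ| ≤ C * (∫ x, Θ x ∂μ - ∫ x, φ k x ∂μ) := by
    intro k μ hΘμ
    have hvμ := hvint μ hΘμ
    have hwμ := hwint k μ hΘμ
    have hφμ := hφint k μ hΘμ
    rw [← integral_sub hvμ hwμ, ← integral_sub hΘμ hφμ, ← integral_const_mul]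
    calc |∫ x, (v x - w k x) ∂μ| ≤ ∫ x, |v x - w k x| ∂μ := by
          simpa [Real.norm_eq_abs] using
            norm_integral_le_integral_norm (μ := μ) (fun x => v x - w k x)
      _ ≤ ∫ x, C * (Θ x - φ k x) ∂μ :=
          integral_mono (hvμ.sub hwμ).abs ((hΘμ.sub hφμ).const_mul C) (fun x => hkey k x)
  -- translate the limsup hypothesis
  set L := ∫⁻ x, ENNReal.ofReal (Θ x) ∂m with hLdef
  have hIeq : ∫ x, Θ x ∂m = L.toReal :=
    integral_eq_lintegral_of_nonneg_ae (ae_of_all _ hΘnonneg) hΘcont.aestronglyMeasurable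
  rw [Metric.tendsto_atTop]
  intro ε hε
  have h8C : (0:ℝ) < 8 * C := by positivity
  set δ := ε / (8 * C) with hδdef
  have hδ : 0 < δ := div_pos hε h8C
  have hCδ : C * δ = ε / 8 := by
    rw [hδdef]; field_simp
  -- choose k
  obtain ⟨k0, hk0⟩ := Metric.tendsto_atTop.mp hDCT δ hδ
  set k := k0 with hkdef
  have hkspec := hk0 k le_rfl
  rw [Real.dist_eq] at hkspec
  have hTP : ∫ x, Θ x ∂m - ∫ x, φ k x ∂m < δ := by
    have := abs_lt.mp hkspec
    linarith [this.1]
  -- eventual bounds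
  have hev1 : ∀ᶠ n in atTop, ∫⁻ x, ENNReal.ofReal (Θ x) ∂(mn n) < L + ENNReal.ofReal δ :=
    eventually_lt_of_limsup_lt
      (lt_of_le_of_lt hlimsup (ENNReal.lt_add_right hfin.ne (ENNReal.ofReal_pos.2 hδ).ne'))
  obtain ⟨N1, hN1⟩ := eventually_atTop.mp hev1
  obtain ⟨N2, hN2⟩ := Metric.tendsto_atTop.mp (hwt k) (ε / 8) (by positivity)
  obtain ⟨N3, hN3⟩ := Metric.tendsto_atTop.mp (hφt k) δ hδ
  refine ⟨max N1 (max N2 N3), fun n hn => ?_⟩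
  have h1 := hN1 n (le_trans (le_max_left _ _) hn)
  have h2 := hN2 n (le_trans ((le_max_left N2 N3).trans (le_max_right N1 _)) hn)
  have h3 := hN3 n (le_trans ((le_max_right N2 N3).trans (le_max_right N1 _)) hn)
  rw [Real.dist_eq] at h2 h3
  -- Θ is integrable w.r.t. mn n and its integral is close
  have hfinn : ∫⁻ x, ENNReal.ofReal (Θ x) ∂(mn n) < ∞ :=
    h1.trans (ENNReal.add_lt_top.mpr ⟨hfin, ENNReal.ofReal_lt_top⟩)
  have hΘn : Integrable Θ (mn n) := hint_of_fin (mn n) hfinn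
  have hTn : ∫ x, Θ x ∂(mn n) < ∫ x, Θ x ∂m + δ := by
    have ht := ENNReal.toReal_strict_mono
      (by finiteness) h1
    rw [ENNReal.toReal_add hfin.ne ENNReal.ofReal_ne_top, ENNReal.toReal_ofReal hδ.le] at ht
    rw [integral_eq_lintegral_of_nonneg_ae (ae_of_all _ hΘnonneg) hΘcont.aestronglyMeasurable,
      hIeq]
    exact ht
  -- assemble
  rw [Real.dist_eq]
  have e1 := hest k (mn n) hΘn
  have e2 := hest k m hΘint
  have hPn : ∫ x, φ k x ∂m - δ < ∫ x, φ k x ∂(mn n) := by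
    have := abs_lt.mp h3
    linarith [this.1]
  have hTnPn : ∫ x, Θ x ∂(mn n) - ∫ x, φ k x ∂(mn n) < 3 * δ := by linarith
  have hb1 : C * (∫ x, Θ x ∂(mn n) - ∫ x, φ k x ∂(mn n)) ≤ C * (3 * δ) :=
    mul_le_mul_of_nonneg_left hTnPn.le hC.le
  have hb2 : C * (∫ x, Θ x ∂m - ∫ x, φ k x ∂m) ≤ C * δ :=
    mul_le_mul_of_nonneg_left hTP.le hC.le
  have t1 := abs_sub_le (∫ x, v x ∂(mn n)) (∫ x, w k x ∂(mn n)) (∫ x, v x ∂m)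
  have t2 := abs_sub_le (∫ x, w k x ∂(mn n)) (∫ x, w k x ∂m) (∫ x, v x ∂m)
  have e2' : |∫ x, w k x ∂m - ∫ x, v x ∂m| ≤ C * (∫ x, Θ x ∂m - ∫ x, φ k x ∂m) := by
    rwa [abs_sub_comm]
  linarith
end

section
/- Let A be a countable set of real-valued Lipschitz functions on a metric space X which is a vector space over ℚ. Let L, L' : A → ℝ be ℚ-linear functionals such that L(a)·L'(a) ≥ 0 for every a ∈ A and L' is not identically zero. Then there exists λ ≥ 0 such that L(a) = λ·L'(a) for all a ∈ A. -/
open Set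
open scoped NNReal

/-- If `A` is a countable `ℚ`-vector space of Lipschitz functions and `L, L' : A → ℝ` are
`ℚ`-linear with `L(a)·L'(a) ≥ 0` for all `a` and `L' ≠ 0`, then `L = λ L'` for some
`λ ≥ 0`. -/
theorem stmt6 {X : Type*} [MetricSpace X] (A : Submodule ℚ (X → ℝ))
    (hcount : Countable A)
    (hlip : ∀ a : A, ∃ K : ℝ≥0, LipschitzWith K (a : X → ℝ))
    (L L' : A →ₗ[ℚ] ℝ)
    (hsign : ∀ a : A, 0 ≤ L a * L' a) (hne : L' ≠ 0) :
    ∃ lam : ℝ, 0 ≤ lam ∧ ∀ a : A, L a = lam * L' a := by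
  obtain ⟨a, ha⟩ : ∃ a : A, L' a ≠ 0 := by
    by_contra h
    push_neg at h
    exact hne (LinearMap.ext fun x => by simp [h x])
  refine ⟨L a / L' a, ?_, ?_⟩
  · have h0 : 0 ≤ (L a * L' a) / (L' a) ^ 2 := div_nonneg (hsign a) (sq_nonneg _)
    have : (L a * L' a) / (L' a) ^ 2 = L a / L' a := by
      field_simp
    linarith [this ▸ h0]
  · intro b
    have key : L b * L' a = L a * L' b := by
      have Hq : ∀ s : ℚ, 0 ≤ (L b * L' b) * ((s:ℝ) * (s:ℝ))
          + (L a * L' b + L b * L' a) * (s : ℝ) + L a * L' a := by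
        intro s
        have h := hsign (a + s • b)
        have e1 : L (a + s • b) = L a + (s : ℝ) * L b := by
          rw [map_add, map_smul, Rat.smul_def]
        have e2 : L' (a + s • b) = L' a + (s : ℝ) * L' b := by
          rw [map_add, map_smul, Rat.smul_def]
        rw [e1, e2] at h
        nlinarith [h]
      have H : ∀ x : ℝ, 0 ≤ (L b * L' b) * (x * x)
          + (L a * L' b + L b * L' a) * x + L a * L' a := by
        intro x
        have hcl : IsClosed {x : ℝ | 0 ≤ (L b * L' b) * (x * x)
            + (L a * L' b + L b * L' a) * x + L a * L' a} :=
          isClosed_le continuous_const (by fun_prop)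
        have hsub : Set.range ((↑) : ℚ → ℝ) ⊆ {x : ℝ | 0 ≤ (L b * L' b) * (x * x)
            + (L a * L' b + L b * L' a) * x + L a * L' a} := by
          rintro _ ⟨s, rfl⟩
          exact Hq s
        have hx : x ∈ closure (Set.range ((↑) : ℚ → ℝ)) := by
          rw [(Rat.denseRange_cast (𝕜 := ℝ)).closure_eq]
          trivial
        exact hcl.closure_subset_iff.mpr hsub hx
      have hd := discrim_le_zero H
      rw [discrim] at hd
      nlinarith [sq_nonneg (L b * L' a - L a * L' b), hd]
    field_simp
    linarith [key]
end

section
/- Let A be a countable ℚ-vector space of bounded Lipschitz functions on a metric space, let A' denote the set of ℚ-linear functionals L : A → ℝ with |L(a)| ≤ C·Lip(a) for some C < ∞ (with ‖L‖ the least such C), endowed with the topology of pointwise convergence on A. Let ν be a Borel probability measure on A' concentrated on {‖L‖ = c} for some c ≥ 0 such that, for every a ∈ A, ν is supported in one of the two halfspaces {L : L(a) ≥ 0} or {L : L(a) ≤ 0}. Then ν is a Dirac mass. -/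
open Set Filter
open scoped NNReal Topology

variable {X : Type*} [MetricSpace X]

/-- `ℚ`-linearity of a functional on a `ℚ`-submodule of functions. -/
def IsQLinearFunc (A : Submodule ℚ (X → ℝ)) (L : A → ℝ) : Prop :=
  (∀ a b : A, L (a + b) = L a + L b) ∧ ∀ (q : ℚ) (a : A), L (q • a) = q * L a

/-- The (global) Lipschitz constant of a function, as a real number. -/
noncomputable def lipConst (f : X → ℝ) : ℝ :=
  sInf {K : ℝ | 0 ≤ K ∧ LipschitzWith (Real.toNNReal K) f}

/-- The space `A'` of `ℚ`-linear functionals `L : A → ℝ` with `|L(a)| ≤ C·Lip(a)`,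
topologized by pointwise convergence on `A`. -/
def Aprime (A : Submodule ℚ (X → ℝ)) : Type _ :=
  {L : A → ℝ // IsQLinearFunc A L ∧
    ∃ C : ℝ, 0 ≤ C ∧ ∀ a : A, |L a| ≤ C * lipConst (a : X → ℝ)}

instance (A : Submodule ℚ (X → ℝ)) : TopologicalSpace (Aprime A) :=
  instTopologicalSpaceSubtype

noncomputable instance (A : Submodule ℚ (X → ℝ)) : MeasurableSpace (Aprime A) :=
  borel (Aprime A)

/-- `‖L‖`: the least constant `C` with `|L(a)| ≤ C Lip(a)` for all `a ∈ A`. -/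
noncomputable def AprimeNorm {A : Submodule ℚ (X → ℝ)} (L : Aprime A) : ℝ :=
  sInf {C : ℝ | 0 ≤ C ∧ ∀ a : A, |L.1 a| ≤ C * lipConst (a : X → ℝ)}

/-! Off a `ν`-null set every functional has norm `c` and, since `A` is countable, for every `a`
the value `L(a)` has one sign independent of `L`. Two `ℚ`-linear functionals with
`L(a) L'(a) ≥ 0` for all `a` are proportional: `q ↦ L(q a + b) L'(q a + b)` is a quadratic
polynomial that is nonnegative on `ℚ`, hence on `ℝ`, so its discriminant
`(L(a) L'(b) - L(b) L'(a))²` vanishes. Equal norms force the factor of proportionality to be `1`,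
so all functionals off the null set coincide. -/

open MeasureTheory

namespace LinearMap

variable {M : Type*} [AddCommGroup M] [Module ℚ M]

theorem apply_mul_apply_eq_of_forall_mul_nonneg (f g : M →ₗ[ℚ] ℝ)
    (h : ∀ a, 0 ≤ f a * g a) (a b : M) : f a * g b = f b * g a := by
  have hrat : ∀ q : ℚ, 0 ≤ (f a * g a) * ((q : ℝ) * q) + (f a * g b + f b * g a) * q
      + f b * g b := fun q => by
    have := h (q • a + b)
    simp only [map_add, map_smul, Rat.smul_def] at this
    linarith
  have hreal : ∀ t : ℝ, 0 ≤ (f a * g a) * (t * t) + (f a * g b + f b * g a) * t + f b * g b :=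
    fun t => Rat.denseRange_cast.induction_on t (isClosed_le continuous_const (by fun_prop)) hrat
  have hdisc := discrim_le_zero hreal
  rw [discrim] at hdisc
  nlinarith [sq_nonneg (f a * g b - f b * g a)]

theorem eq_zero_or_exists_nonneg_of_forall_mul_nonneg (f g : M →ₗ[ℚ] ℝ)
    (h : ∀ a, 0 ≤ f a * g a) : g = 0 ∨ ∃ t : ℝ, 0 ≤ t ∧ ∀ a, f a = t * g a := by
  by_cases hg : g = 0
  · exact .inl hg
  obtain ⟨b, hb⟩ : ∃ b, g b ≠ 0 := by
    by_contra! hb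
    exact hg (ext hb)
  refine .inr ⟨f b / g b, ?_, fun a => ?_⟩
  · rw [← mul_div_mul_right _ _ hb]
    exact div_nonneg (h b) (mul_self_nonneg _)
  · rw [div_mul_eq_mul_div, eq_div_iff hb, apply_mul_apply_eq_of_forall_mul_nonneg f g h a b]

end LinearMap

theorem MeasureTheory.Measure.eq_dirac_of_ae_eq {α : Type*} [MeasurableSpace α]
    {μ : Measure α} [IsProbabilityMeasure μ] {x₀ : α} (h : ∀ᵐ x ∂μ, x = x₀) :
    μ = dirac x₀ := by
  ext s hs
  rw [dirac_apply' _ hs]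
  by_cases hx : x₀ ∈ s
  · rw [Set.indicator_of_mem hx, Pi.one_apply, ← prob_compl_eq_zero_iff hs]
    exact measure_mono_null (by rintro x hxs rfl; exact hxs hx) (ae_iff.1 h)
  · rw [Set.indicator_of_notMem hx]
    exact measure_mono_null (by rintro x hxs rfl; exact hx hxs) (ae_iff.1 h)

theorem lipConst_nonneg (f : X → ℝ) : 0 ≤ lipConst f :=
  Real.sInf_nonneg fun _ hK => hK.1

section Aprime

variable {A : Submodule ℚ (X → ℝ)}

def Aprime.toLinearMap (L : Aprime A) : A →ₗ[ℚ] ℝ where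
  toFun := L.1
  map_add' := L.2.1.1
  map_smul' q a := by rw [L.2.1.2, Rat.smul_def]; rfl

theorem aprimeNorm_nonneg (L : Aprime A) : 0 ≤ AprimeNorm L :=
  Real.sInf_nonneg fun _ hK => hK.1

theorem aprimeNorm_le (L : Aprime A) {C : ℝ} (hC : 0 ≤ C)
    (h : ∀ a : A, |L.1 a| ≤ C * lipConst (a : X → ℝ)) : AprimeNorm L ≤ C :=
  csInf_le ⟨0, fun _ hx => hx.1⟩ ⟨hC, h⟩

theorem abs_apply_le_aprimeNorm_mul (L : Aprime A) (a : A) :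
    |L.1 a| ≤ AprimeNorm L * lipConst (a : X → ℝ) := by
  refine le_of_forall_pos_le_add fun ε hε => ?_
  have hlip := lipConst_nonneg (a : X → ℝ)
  have hδ : 0 < ε / (lipConst (a : X → ℝ) + 1) := by positivity
  obtain ⟨C, ⟨-, hC⟩, hClt⟩ := Real.lt_sInf_add_pos L.2.2 hδ
  change C < AprimeNorm L + _ at hClt
  have hδε : ε / (lipConst (a : X → ℝ) + 1) * lipConst (a : X → ℝ) ≤ ε := by
    rw [div_mul_eq_mul_div, div_le_iff₀ (by linarith)]
    nlinarith
  nlinarith [hC a]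

theorem aprimeNorm_eq_zero_iff (L : Aprime A) : AprimeNorm L = 0 ↔ ∀ a, L.1 a = 0 := by
  refine ⟨fun h a => abs_nonpos_iff.1 ?_, fun h => ?_⟩
  · simpa [h] using abs_apply_le_aprimeNorm_mul L a
  · exact (aprimeNorm_le L le_rfl fun a => by simp [h a]).antisymm
      (aprimeNorm_nonneg L)

theorem aprimeNorm_le_mul_of_abs_le (L L' : Aprime A) {k : ℝ} (hk : 0 ≤ k)
    (h : ∀ a, |L.1 a| ≤ k * |L'.1 a|) : AprimeNorm L ≤ k * AprimeNorm L' :=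
  aprimeNorm_le L (mul_nonneg hk (aprimeNorm_nonneg L')) fun a =>
    calc |L.1 a| ≤ k * |L'.1 a| := h a
      _ ≤ k * (AprimeNorm L' * lipConst (a : X → ℝ)) :=
        mul_le_mul_of_nonneg_left (abs_apply_le_aprimeNorm_mul L' a) hk
      _ = k * AprimeNorm L' * lipConst (a : X → ℝ) := (mul_assoc ..).symm

theorem aprimeNorm_eq_mul_of_apply_eq_mul (L L' : Aprime A) {t : ℝ} (ht : 0 ≤ t)
    (h : ∀ a, L.1 a = t * L'.1 a) : AprimeNorm L = t * AprimeNorm L' := by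
  rcases ht.eq_or_lt with rfl | ht
  · simpa [aprimeNorm_eq_zero_iff] using h
  refine (aprimeNorm_le_mul_of_abs_le L L' ht.le fun a => by
    rw [h, abs_mul, abs_of_pos ht]).antisymm ?_
  rw [← le_inv_mul_iff₀ ht]
  exact aprimeNorm_le_mul_of_abs_le L' L (inv_nonneg.2 ht.le) fun a => by
    rw [h, abs_mul, abs_of_pos ht, inv_mul_cancel_left₀ ht.ne']

theorem Aprime.eq_of_forall_mul_nonneg {L L' : Aprime A} (hsign : ∀ a, 0 ≤ L.1 a * L'.1 a)
    (hnorm : AprimeNorm L = AprimeNorm L') : L = L' := by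
  by_cases hN : AprimeNorm L' = 0
  · have h' := (aprimeNorm_eq_zero_iff L').1 hN
    have h := (aprimeNorm_eq_zero_iff L).1 (hnorm.trans hN)
    exact Subtype.ext (funext fun a => (h a).trans (h' a).symm)
  obtain ⟨t, ht, hLL'⟩ := (LinearMap.eq_zero_or_exists_nonneg_of_forall_mul_nonneg
    L.toLinearMap L'.toLinearMap hsign).resolve_left fun h0 =>
      hN ((aprimeNorm_eq_zero_iff L').2 (LinearMap.congr_fun h0))
  have ht1 : t = 1 := by
    have := aprimeNorm_eq_mul_of_apply_eq_mul L L' ht hLL'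
    rw [hnorm] at this
    exact (mul_eq_right₀ hN).1 this.symm
  exact Subtype.ext (funext fun a => by rw [← one_mul (L'.1 a), ← ht1]; exact hLL' a)

end Aprime

theorem stmt7_general (A : Submodule ℚ (X → ℝ)) (hcount : Countable A)
    (ν : MeasureTheory.Measure (Aprime A)) [MeasureTheory.IsProbabilityMeasure ν]
    (c : ℝ)
    (hconc : ν {L : Aprime A | AprimeNorm L ≠ c} = 0)
    (hhalf : ∀ a : A, ν {L : Aprime A | L.1 a < 0} = 0 ∨ ν {L : Aprime A | 0 < L.1 a} = 0) :
    ∃ L₀ : Aprime A, ν = MeasureTheory.Measure.dirac L₀ := by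
  have hsign : ∀ a : A, ∃ s : ℝ, s ≠ 0 ∧ ∀ᵐ L ∂ν, 0 ≤ s * L.1 a := fun a =>
    (hhalf a).elim (fun h => ⟨1, one_ne_zero, by simpa [ae_iff] using h⟩)
      (fun h => ⟨-1, by norm_num, by simpa [ae_iff] using h⟩)
  choose s hs_ne hs using hsign
  have hgood : ∀ᵐ L ∂ν, AprimeNorm L = c ∧ ∀ a, 0 ≤ s a * L.1 a :=
    (ae_iff.2 hconc).and (ae_all_iff.2 hs)
  obtain ⟨L₀, hL₀c, hL₀s⟩ := hgood.exists
  refine ⟨L₀, Measure.eq_dirac_of_ae_eq (hgood.mono fun L ⟨hLc, hLs⟩ =>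
    Aprime.eq_of_forall_mul_nonneg (fun a => ?_) (hLc.trans hL₀c.symm))⟩
  nlinarith [mul_nonneg (hLs a) (hL₀s a), sq_pos_of_ne_zero (hs_ne a)]

/-- A probability measure on `A'` concentrated on `{‖L‖ = c}` and supported, for each
`a ∈ A`, in one of the halfspaces `{L(a) ≥ 0}`, `{L(a) ≤ 0}`, is a Dirac mass. -/
theorem stmt7 (A : Submodule ℚ (X → ℝ)) (hcount : Countable A)
    (hlip : ∀ a : A, ∃ K : ℝ≥0, LipschitzWith K (a : X → ℝ))
    (hbdd : ∀ a : A, ∃ C : ℝ, ∀ x, |(a : X → ℝ) x| ≤ C)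
    (ν : MeasureTheory.Measure (Aprime A)) [MeasureTheory.IsProbabilityMeasure ν]
    (c : ℝ) (hc : 0 ≤ c)
    (hconc : ν {L : Aprime A | AprimeNorm L ≠ c} = 0)
    (hhalf : ∀ a : A, ν {L : Aprime A | L.1 a < 0} = 0 ∨ ν {L : Aprime A | 0 < L.1 a} = 0) :
    ∃ L₀ : Aprime A, ν = MeasureTheory.Measure.dirac L₀ :=
  stmt7_general A hcount ν c hconc hhalf
end

section
/- Let b : A_bs → L^0(X, m) be a ℚ-linear map on a countable algebra A_bs of bounded Lipschitz functions with bounded support, satisfying |b(f)| ≤ h·Lip_a(f) m-a.e. for some h ∈ L^0(X, m), where Lip_a denotes the asymptotic Lipschitz constant. Then b satisfies the Leibniz rule: b(fg) = f·b(g) + g·b(f) m-a.e. in X, for all f, g ∈ A_bs. -/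
open MeasureTheory Filter Metric Set
open scoped ENNReal Topology NNReal

/-- The asymptotic Lipschitz constant
`Lip_a f (x) = inf_{r>0} Lip(f|_{B_r(x)})`. -/
noncomputable def asympLip {X : Type*} [MetricSpace X] (f : X → ℝ) (x : X) : ℝ :=
  sInf {K : ℝ | 0 ≤ K ∧ ∃ r > (0:ℝ), LipschitzOnWith (Real.toNNReal K) f (Metric.ball x r)}

lemma asympLip_nonneg {X : Type*} [MetricSpace X] (f : X → ℝ) (x : X) :
    0 ≤ asympLip f x :=
  Real.sInf_nonneg (fun _ hK => hK.1)

lemma asympLip_key_bound {X : Type*} [MetricSpace X] {f g : X → ℝ} {Kf Kg : ℝ≥0}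
    (hf : LipschitzWith Kf f) (hg : LipschitzWith Kg g) (l mu : ℝ) (x : X) :
    asympLip (f * g + (-l) • g + (-mu) • f) x
      ≤ |f x - l| * Kg + |g x - mu| * Kf := by
  set F : X → ℝ := f * g + (-l) • g + (-mu) • f with hF
  set B : ℝ := |f x - l| * Kg + |g x - mu| * Kf with hB
  have hB0 : 0 ≤ B := by positivity
  have key : ∀ r : ℝ, 0 < r →
      asympLip F x ≤ B + r * (Kf * Kg + Kg * Kf) := by
    intro r hr
    set K : ℝ := B + r * (Kf * Kg + Kg * Kf) with hK
    have hK0 : 0 ≤ K := by positivity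
    have hlip : LipschitzOnWith (Real.toNNReal K) F (Metric.ball x r) := by
      apply LipschitzOnWith.of_dist_le_mul
      intro u hu v hv
      rw [Real.coe_toNNReal K hK0, Real.dist_eq]
      have hFuv : F u - F v = (f u - l) * (g u - g v) + (g v - mu) * (f u - f v) := by
        simp only [hF, Pi.add_apply, Pi.mul_apply, Pi.smul_apply, smul_eq_mul]
        ring
      have h1 : |f u - l| ≤ |f x - l| + Kf * r := by
        have := hf.dist_le_mul u x
        have hd : dist u x < r := mem_ball.mp hu
        have : |f u - f x| ≤ Kf * r := by
          rw [← Real.dist_eq]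
          calc dist (f u) (f x) ≤ Kf * dist u x := hf.dist_le_mul u x
            _ ≤ Kf * r := by
              exact mul_le_mul_of_nonneg_left hd.le Kf.coe_nonneg
        calc |f u - l| = |(f u - f x) + (f x - l)| := by ring_nf
          _ ≤ |f u - f x| + |f x - l| := abs_add_le _ _
          _ ≤ |f x - l| + Kf * r := by linarith
      have h2 : |g v - mu| ≤ |g x - mu| + Kg * r := by
        have hd : dist v x < r := mem_ball.mp hv
        have : |g v - g x| ≤ Kg * r := by
          rw [← Real.dist_eq]
          calc dist (g v) (g x) ≤ Kg * dist v x := hg.dist_le_mul v x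
            _ ≤ Kg * r := by
              exact mul_le_mul_of_nonneg_left hd.le Kg.coe_nonneg
        calc |g v - mu| = |(g v - g x) + (g x - mu)| := by ring_nf
          _ ≤ |g v - g x| + |g x - mu| := abs_add_le _ _
          _ ≤ |g x - mu| + Kg * r := by linarith
      have h3 : |g u - g v| ≤ Kg * dist u v := by
        rw [← Real.dist_eq]; exact hg.dist_le_mul u v
      have h4 : |f u - f v| ≤ Kf * dist u v := by
        rw [← Real.dist_eq]; exact hf.dist_le_mul u v
      have hdnn : (0:ℝ) ≤ dist u v := dist_nonneg
      calc |F u - F v| = |(f u - l) * (g u - g v) + (g v - mu) * (f u - f v)| := by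
            rw [hFuv]
        _ ≤ |f u - l| * |g u - g v| + |g v - mu| * |f u - f v| := by
            refine (abs_add_le _ _).trans ?_
            rw [abs_mul, abs_mul]
        _ ≤ (|f x - l| + Kf * r) * (Kg * dist u v)
              + (|g x - mu| + Kg * r) * (Kf * dist u v) := by
            gcongr <;> positivity
        _ = K * dist u v := by rw [hK, hB]; ring
    have hmem : K ∈ {K : ℝ | 0 ≤ K ∧ ∃ r > (0:ℝ),
        LipschitzOnWith (Real.toNNReal K) F (Metric.ball x r)} :=
      ⟨hK0, r, hr, hlip⟩
    exact csInf_le ⟨0, fun y hy => hy.1⟩ hmem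
  refine le_of_forall_pos_le_add (fun ε hε => ?_)
  set D : ℝ := (Kf : ℝ) * Kg + Kg * Kf with hD
  have hD0 : 0 ≤ D := by positivity
  have hr : (0:ℝ) < ε / (D + 1) := by positivity
  have := key (ε / (D + 1)) hr
  have hle : ε / (D + 1) * D ≤ ε := by
    rw [div_mul_eq_mul_div, div_le_iff₀ (by linarith)]
    nlinarith
  linarith

/-- Any pre-derivation, i.e. a `ℚ`-linear map `b : A_bs → L⁰(X,m)` with
`|b(f)| ≤ h·Lip_a(f)` `m`-a.e., satisfies the Leibniz rule. -/
theorem stmt8 {X : Type*} [MetricSpace X] [MeasurableSpace X] [BorelSpace X]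
    (m : Measure X)
    (S : Set (X → ℝ)) (hScount : S.Countable)
    (hS : ∀ f ∈ S, (∃ K : ℝ≥0, LipschitzWith K f) ∧ (∃ C, ∀ x, |f x| ≤ C) ∧
      Bornology.IsBounded (Function.support f))
    (hSadd : ∀ f ∈ S, ∀ g ∈ S, f + g ∈ S)
    (hSmul : ∀ f ∈ S, ∀ g ∈ S, f * g ∈ S)
    (hSsmul : ∀ (q : ℚ), ∀ f ∈ S, (q : ℝ) • f ∈ S)
    (b : (X → ℝ) → X → ℝ) (h : X → ℝ)
    (hadd : ∀ f ∈ S, ∀ g ∈ S, ∀ᵐ x ∂m, b (f + g) x = b f x + b g x)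
    (hsmul : ∀ (q : ℚ), ∀ f ∈ S, ∀ᵐ x ∂m, b ((q : ℝ) • f) x = q * b f x)
    (hloc : ∀ f ∈ S, ∀ᵐ x ∂m, |b f x| ≤ h x * asympLip f x) :
    ∀ f ∈ S, ∀ g ∈ S, ∀ᵐ x ∂m, b (f * g) x = f x * b g x + g x * b f x := by
  intro f hf g hg
  obtain ⟨Kf, hKf⟩ := (hS f hf).1
  obtain ⟨Kg, hKg⟩ := (hS g hg).1
  -- the family of test functions
  set F : ℚ × ℚ → X → ℝ :=
    fun q => f * g + ((-q.1 : ℚ) : ℝ) • g + ((-q.2 : ℚ) : ℝ) • f with hFdef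
  have hFmem : ∀ q : ℚ × ℚ, F q ∈ S := by
    intro q
    exact hSadd _ (hSadd _ (hSmul f hf g hg) _ (hSsmul (-q.1) g hg)) _ (hSsmul (-q.2) f hf)
  have H1 : ∀ᵐ x ∂m, ∀ q : ℚ × ℚ,
      b (F q) x = b (f * g) x - (q.1 : ℝ) * b g x - (q.2 : ℝ) * b f x := by
    rw [ae_all_iff]
    intro q
    have h1 := hadd _ (hSadd _ (hSmul f hf g hg) _ (hSsmul (-q.1) g hg)) _
      (hSsmul (-q.2) f hf)
    have h2 := hadd _ (hSmul f hf g hg) _ (hSsmul (-q.1) g hg)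
    have h3 := hsmul (-q.1) g hg
    have h4 := hsmul (-q.2) f hf
    filter_upwards [h1, h2, h3, h4] with x e1 e2 e3 e4
    have : b (F q) x = b (f * g) x + (-q.1 : ℚ) * b g x + (-q.2 : ℚ) * b f x := by
      rw [hFdef]
      simp only [e1, e2, e3, e4]
    rw [this]; push_cast; ring
  have H2 : ∀ᵐ x ∂m, ∀ q : ℚ × ℚ, |b (F q) x| ≤ h x * asympLip (F q) x := by
    rw [ae_all_iff]
    intro q
    exact hloc _ (hFmem q)
  filter_upwards [H1, H2] with x h1 h2
  -- pointwise argument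
  have key : ∀ q : ℚ × ℚ,
      |b (f * g) x - (q.1 : ℝ) * b g x - (q.2 : ℝ) * b f x|
        ≤ |h x| * (|f x - (q.1 : ℝ)| * Kg + |g x - (q.2 : ℝ)| * Kf) := by
    intro q
    have hbound : asympLip (F q) x ≤ |f x - (q.1 : ℝ)| * Kg + |g x - (q.2 : ℝ)| * Kf := by
      have := asympLip_key_bound hKf hKg (q.1 : ℝ) (q.2 : ℝ) x
      have hcast : F q = f * g + (-(q.1 : ℝ)) • g + (-(q.2 : ℝ)) • f := by
        rw [hFdef]; push_cast; rfl
      rwa [hcast]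
    have hnn := asympLip_nonneg (F q) x
    calc |b (f * g) x - (q.1 : ℝ) * b g x - (q.2 : ℝ) * b f x| = |b (F q) x| := by
          rw [h1 q]
      _ ≤ h x * asympLip (F q) x := h2 q
      _ ≤ |h x| * asympLip (F q) x := mul_le_mul_of_nonneg_right (le_abs_self _) hnn
      _ ≤ |h x| * (|f x - (q.1 : ℝ)| * Kg + |g x - (q.2 : ℝ)| * Kf) :=
          mul_le_mul_of_nonneg_left hbound (abs_nonneg _)
  have main : |b (f * g) x - (f x * b g x + g x * b f x)| ≤ 0 := by
    refine le_of_forall_pos_le_add (fun ε hε => ?_)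
    set C : ℝ := |h x| * ((Kg : ℝ) + Kf) + |b g x| + |b f x| + 1 with hC
    have hC0 : (0:ℝ) < C := by positivity
    have hδ : (0:ℝ) < ε / C := by positivity
    obtain ⟨q1, hq1⟩ := exists_rat_near (f x) hδ
    obtain ⟨q2, hq2⟩ := exists_rat_near (g x) hδ
    have hk := key (q1, q2)
    simp only at hk
    have split : b (f * g) x - (f x * b g x + g x * b f x)
        = (b (f * g) x - (q1 : ℝ) * b g x - (q2 : ℝ) * b f x)
          + ((q1 : ℝ) - f x) * b g x + ((q2 : ℝ) - g x) * b f x := by ring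
    have habs : |b (f * g) x - (f x * b g x + g x * b f x)|
        ≤ |b (f * g) x - (q1 : ℝ) * b g x - (q2 : ℝ) * b f x|
          + |f x - (q1 : ℝ)| * |b g x| + |g x - (q2 : ℝ)| * |b f x| := by
      rw [split]
      have a1 := abs_add_le ((b (f * g) x - (q1 : ℝ) * b g x - (q2 : ℝ) * b f x)
          + ((q1 : ℝ) - f x) * b g x) (((q2 : ℝ) - g x) * b f x)
      have a2 := abs_add_le (b (f * g) x - (q1 : ℝ) * b g x - (q2 : ℝ) * b f x)
          (((q1 : ℝ) - f x) * b g x)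
      have a3 : |((q1 : ℝ) - f x) * b g x| = |f x - (q1 : ℝ)| * |b g x| := by
        rw [abs_mul, abs_sub_comm]
      have a4 : |((q2 : ℝ) - g x) * b f x| = |g x - (q2 : ℝ)| * |b f x| := by
        rw [abs_mul, abs_sub_comm]
      linarith
    have hq1' : |f x - (q1 : ℝ)| ≤ ε / C := hq1.le
    have hq2' : |g x - (q2 : ℝ)| ≤ ε / C := hq2.le
    have hfin : |h x| * (|f x - (q1 : ℝ)| * Kg + |g x - (q2 : ℝ)| * Kf)
          + |f x - (q1 : ℝ)| * |b g x| + |g x - (q2 : ℝ)| * |b f x|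
        ≤ (ε / C) * C := by
      rw [hC]
      have e1 : (0:ℝ) ≤ |h x| := abs_nonneg _
      have e2 : (0:ℝ) ≤ (Kg : ℝ) := Kg.coe_nonneg
      have e3 : (0:ℝ) ≤ (Kf : ℝ) := Kf.coe_nonneg
      have e4 : (0:ℝ) ≤ |b g x| := abs_nonneg _
      have e5 : (0:ℝ) ≤ |b f x| := abs_nonneg _
      nlinarith [abs_nonneg (f x - (q1:ℝ)), abs_nonneg (g x - (q2:ℝ)),
        mul_nonneg e1 e2, mul_nonneg e1 e3, hδ.le]
    have : (ε / C) * C = ε := div_mul_cancel₀ ε (ne_of_gt hC0)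
    linarith [habs, hk, hfin]
  have := abs_nonneg (b (f * g) x - (f x * b g x + g x * b f x))
  have hz : b (f * g) x - (f x * b g x + g x * b f x) = 0 := by
    have := abs_eq_zero.mp (le_antisymm main this)
    exact this
  linarith [hz]
end

section
/- In an L^2(X, m)-normed Hilbert module M, if m, m' ∈ M satisfy ⟨m, m'⟩_x = |m|(x)·|m'|(x) m-a.e. and both |m| ≥ 1/n and |m'| ≥ 1/n m-a.e. on a Borel set E, then the normalized elements χ_E·m/|m| and χ_E·m'/|m'| coincide in M. -/
open MeasureTheory Filter Set
open scoped ENNReal Topology NNReal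

set_option maxHeartbeats 1000000 in
/-- In an `L²(X,m)`-normed Hilbert module (with action `smulF` of functions and pointwise
norm `nrm`), if `⟨a,b⟩ₓ = |a|(x)·|b|(x)` m-a.e. and `|a|, |b| ≥ 1/n` m-a.e. on a Borel
set `E`, then `χ_E·a/|a| = χ_E·b/|b|`. -/
theorem stmt10 {X : Type*} [MeasurableSpace X] (m : Measure X)
    {M : Type*} [AddCommGroup M] [Module ℝ M]
    (smulF : (X → ℝ) → M → M) (nrm : M → X → ℝ)
    -- pointwise norm axioms
    (hnn : ∀ a : M, 0 ≤ᵐ[m] nrm a)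
    (htri : ∀ a b : M, ∀ᵐ x ∂m, nrm (a + b) x ≤ nrm a x + nrm b x)
    (hsmnrm : ∀ (χ : X → ℝ) (a : M), ∀ᵐ x ∂m, nrm (smulF χ a) x = |χ x| * nrm a x)
    -- `L^∞`-module axioms
    (hsm_add : ∀ (χ : X → ℝ) (a b : M), smulF χ (a + b) = smulF χ a + smulF χ b)
    (hadd_sm : ∀ (χ χ' : X → ℝ) (a : M), smulF (χ + χ') a = smulF χ a + smulF χ' a)
    (hsm_sm : ∀ (χ χ' : X → ℝ) (a : M), smulF χ (smulF χ' a) = smulF (χ * χ') a)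
    (hone : ∀ a : M, smulF (fun _ => 1) a = a)
    -- Hilbert module: pointwise parallelogram identity and definiteness of the norm
    (hpar : ∀ a b : M, ∀ᵐ x ∂m,
      (nrm (a + b) x) ^ 2 + (nrm (a - b) x) ^ 2 = 2 * (nrm a x) ^ 2 + 2 * (nrm b x) ^ 2)
    (hdef : ∀ a : M, (∀ᵐ x ∂m, nrm a x = 0) → a = 0)
    -- data
    (a b : M) (E : Set X) (hE : MeasurableSet E) (n : ℕ) (hn : 0 < n)
    (hlow : ∀ᵐ x ∂m, x ∈ E → (1 : ℝ) / n ≤ nrm a x ∧ (1 : ℝ) / n ≤ nrm b x)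
    (hpair : ∀ᵐ x ∂m,
      ((nrm (a + b) x) ^ 2 - (nrm (a - b) x) ^ 2) / 4 = nrm a x * nrm b x) :
    smulF (E.indicator fun x => (nrm a x)⁻¹) a
      = smulF (E.indicator fun x => (nrm b x)⁻¹) b := by

  classical
  -- notation
  set f : X → ℝ := fun x => nrm a x with hf
  set g : X → ℝ := fun x => nrm b x with hg
  -- smul by the zero function is zero
  have hzero : ∀ c : M, smulF (fun _ => (0:ℝ)) c = 0 := by
    intro c
    have he : ((fun _ => (0:ℝ)) + fun _ => (0:ℝ)) = (fun _ : X => (0:ℝ)) := by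
      funext x; simp
    have h2 := hadd_sm (fun _ => (0:ℝ)) (fun _ => (0:ℝ)) c
    rw [he] at h2
    have : smulF (fun _ => (0:ℝ)) c + smulF (fun _ => (0:ℝ)) c
        = smulF (fun _ => (0:ℝ)) c + 0 := by rw [add_zero]; exact h2.symm
    exact (add_left_cancel this)
  -- subtraction of functions
  have hsub_sm : ∀ (χ χ' : X → ℝ) (c : M),
      smulF (fun x => χ x - χ' x) c = smulF χ c - smulF χ' c := by
    intro χ χ' c
    have he : ((fun x => χ x - χ' x) + χ') = χ := by funext x; simp
    have h2 := hadd_sm (fun x => χ x - χ' x) χ' c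
    rw [he] at h2
    rw [eq_sub_iff_add_eq]
    exact h2.symm
  -- a.e. equal functions act equally
  have hcongr : ∀ (χ χ' : X → ℝ) (c : M), χ =ᵐ[m] χ' → smulF χ c = smulF χ' c := by
    intro χ χ' c hae
    have h0 : smulF (fun x => χ x - χ' x) c = 0 := by
      apply hdef
      filter_upwards [hsmnrm (fun x => χ x - χ' x) c, hae] with x h1 h2
      rw [h1]; simp [h2]
    have := hsub_sm χ χ' c
    rw [h0] at this
    exact (sub_eq_zero.mp this.symm)
  set P : M := smulF g a with hP
  set Q : M := smulF f b with hQ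
  -- element identities
  have eq1 : (P + Q) + smulF (fun x => g x - f x) b = smulF g (a + b) := by
    rw [hsm_add g a b, hsub_sm g f b, hP, hQ]; abel
  have eq2 : (P + Q) + smulF (fun x => f x - g x) a = smulF f (a + b) := by
    rw [hsm_add f a b, hsub_sm f g a, hP, hQ]; abel
  -- key: |P - Q| = 0 a.e.
  have hPQ0 : ∀ᵐ x ∂m, nrm (P - Q) x = 0 := by
    have ht1 := htri (P + Q) (smulF (fun x => g x - f x) b)
    have ht2 := htri (P + Q) (smulF (fun x => f x - g x) a)
    rw [eq1] at ht1
    rw [eq2] at ht2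
    filter_upwards [hnn a, hnn b, hnn (a + b), hnn (P - Q), hpar a b, hpair,
      hsmnrm g a, hsmnrm f b, hpar P Q, hsmnrm g (a + b), hsmnrm f (a + b),
      hsmnrm (fun x => g x - f x) b, hsmnrm (fun x => f x - g x) a, ht1, ht2]
      with x hα hβ hSnn hdnn hparab hpr hPn hQn hparPQ hg1 hf1 hg2 hf2 t1 t2
    simp only [Pi.zero_apply] at hα hβ hSnn hdnn
    simp only [hf, hg] at hPn hQn hparPQ hg1 hf1 hg2 hf2 t1 t2
    -- |a+b|(x) = |a|(x) + |b|(x)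
    have hS2 : nrm (a + b) x ^ 2 = (nrm a x + nrm b x) ^ 2 := by
      linear_combination hparab / 2 + 2 * hpr
    have hSval : nrm (a + b) x = nrm a x + nrm b x := by
      have hfac : (nrm (a + b) x - (nrm a x + nrm b x))
          * (nrm (a + b) x + (nrm a x + nrm b x)) = 0 := by linear_combination hS2
      rcases mul_eq_zero.mp hfac with h | h
      · linarith
      · linarith
    rw [abs_of_nonneg hβ] at hPn hg1
    rw [abs_of_nonneg hα] at hQn hf1
    rw [hPn, hQn] at hparPQ
    rw [hg1, hSval] at t1
    rw [hf1, hSval] at t2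
    -- lower bound for |P+Q|
    have hs : 2 * nrm a x * nrm b x ≤ nrm (P + Q) x := by
      rcases le_total (nrm a x) (nrm b x) with hab | hab
      · rw [hg2, abs_of_nonneg (by linarith : (0:ℝ) ≤ nrm b x - nrm a x)] at t1
        nlinarith [t1]
      · rw [hf2, abs_of_nonneg (by linarith : (0:ℝ) ≤ nrm a x - nrm b x)] at t2
        nlinarith [t2]
    have hs0 : (0:ℝ) ≤ 2 * nrm a x * nrm b x := by positivity
    have hss : (2 * nrm a x * nrm b x) ^ 2 ≤ nrm (P + Q) x ^ 2 :=
      pow_le_pow_left₀ hs0 hs 2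
    have hd2 : nrm (P - Q) x ^ 2 ≤ 0 := by
      ring_nf at hparPQ hss
      linarith [hparPQ, hss]
    have hd2' : nrm (P - Q) x ^ 2 = 0 := le_antisymm hd2 (sq_nonneg _)
    exact pow_eq_zero_iff (n := 2) (by norm_num) |>.mp hd2'
  have hPQ : P = Q := by
    have := hdef (P - Q) hPQ0
    exact sub_eq_zero.mp this
  -- final assembly
  have hninv : (0:ℝ) < 1 / n := by positivity
  set hfun : X → ℝ := E.indicator (fun x => (nrm a x)⁻¹ * (nrm b x)⁻¹) with hhfun
  have e1 : smulF (E.indicator fun x => (nrm a x)⁻¹) a = smulF hfun P := by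
    rw [hP, hsm_sm hfun g a]
    apply hcongr
    filter_upwards [hlow] with x hx
    by_cases hxE : x ∈ E
    · obtain ⟨h1, h2⟩ := hx hxE
      have ha0 : nrm a x ≠ 0 := ne_of_gt (lt_of_lt_of_le hninv h1)
      have hb0 : nrm b x ≠ 0 := ne_of_gt (lt_of_lt_of_le hninv h2)
      simp only [Pi.mul_apply, hhfun, hf, hg, Set.indicator_of_mem hxE]
      field_simp
    · simp only [Pi.mul_apply, hhfun, Set.indicator_of_notMem hxE, zero_mul]
  have e2 : smulF (E.indicator fun x => (nrm b x)⁻¹) b = smulF hfun Q := by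
    rw [hQ, hsm_sm hfun f b]
    apply hcongr
    filter_upwards [hlow] with x hx
    by_cases hxE : x ∈ E
    · obtain ⟨h1, h2⟩ := hx hxE
      have ha0 : nrm a x ≠ 0 := ne_of_gt (lt_of_lt_of_le hninv h1)
      have hb0 : nrm b x ≠ 0 := ne_of_gt (lt_of_lt_of_le hninv h2)
      simp only [Pi.mul_apply, hhfun, hf, hg, Set.indicator_of_mem hxE]
      field_simp
    · simp only [Pi.mul_apply, hhfun, Set.indicator_of_notMem hxE, zero_mul]
  rw [e1, e2, hPQ]
end
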